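/- arXiv:2405.15173 — 2 statements merged into one kernel-verified Lean document; each statement's English description precedes it below -/
import Mathlib

section
/- There exist a finite probability space (Ω, μ) and random variables X : Ω → Fin 4, I : Ω → Bool, Y : Ω → Bool, and a classifier Ŷ : Ω → Bool such that (i) Ŷ is a perfect classifier in the sense that for every value x of X with μ(X = x) > 0 and every y, the conditional probabilities satisfy P(Ŷ = y | X = x) = P(Y = y | X = x), and yet (ii) demographic parity fails: there exist y, i₁, i₂ with P(Ŷ = y | I = i₁) ≠ P(Ŷ = y | I = i₂). In other words, when X is entangled with the attribute I and the label Y, using a perfect classifier for Ŷ does not imply demographic parity. -/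
/-!
A perfect classifier reproduces the conditional law of the label given the input, so it inherits
every dependence of the label on the sensitive attribute. In the extreme case where the label
equals the attribute, the perfect classifier `Ŷ = Y` predicts `true` with probability one on the
group `I = true` and with probability zero on the group `I = false`.
-/

open Classical in
/-- Probability of an event `p` under a probability mass function `μ`
on a finite sample space `Ω`. -/
noncomputable def prob {Ω : Type*} [Fintype Ω] (μ : Ω → ℝ) (p : Ω → Prop) : ℝ :=
  ∑ ω, if p ω then μ ω else 0

/-- Conditional probability `P(p | q) = μ(p ∧ q) / μ(q)`. -/
noncomputable def condProb {Ω : Type*} [Fintype Ω] (μ : Ω → ℝ) (p q : Ω → Prop) : ℝ :=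
  prob μ (fun ω => p ω ∧ q ω) / prob μ q

section

variable {Ω : Type*} [Fintype Ω] {μ : Ω → ℝ} {p q : Ω → Prop}

theorem prob_pos_of_mem (hμ : ∀ ω, 0 ≤ μ ω) {ω₀ : Ω} (hp : p ω₀) (hω₀ : 0 < μ ω₀) :
    0 < prob μ p := by
  classical
  unfold prob
  refine Finset.sum_pos' (fun ω _ => ?_) ⟨ω₀, Finset.mem_univ _, by simp [hp, hω₀]⟩
  split_ifs
  exacts [hμ ω, le_rfl]

theorem condProb_self (hp : prob μ p ≠ 0) : condProb μ p p = 1 := by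
  simp only [condProb, and_self, div_self hp]

theorem condProb_eq_zero_of_disjoint (hpq : ∀ ω, p ω → ¬ q ω) : condProb μ p q = 0 := by
  classical
  have hempty : prob μ (fun ω => p ω ∧ q ω) = 0 :=
    Finset.sum_eq_zero fun ω _ => if_neg fun h => hpq ω h.1 h.2
  rw [condProb, hempty, zero_div]

end

/-- Theorem 1 (Locatello et al.): there is a finite probability space `(Ω, μ)`
(with `Ω = Fin n`) and random variables `X : Ω → Fin 4`, `I Y Ŷ : Ω → Bool`
such that `Ŷ` is a perfect classifier for `Y` given `X`, i.e.
`P(Ŷ = y | X = x) = P(Y = y | X = x)` for all `y` and all `x` of positive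
probability, yet demographic parity with respect to `I` fails: there are
`y, i₁, i₂` with `P(Ŷ = y | I = i₁) ≠ P(Ŷ = y | I = i₂)`. -/
theorem perfect_classifier_not_imp_demographic_parity :
    ∃ (n : ℕ) (μ : Fin n → ℝ)
      (X : Fin n → Fin 4) (I : Fin n → Bool) (Y : Fin n → Bool) (Yhat : Fin n → Bool),
      (∀ ω, 0 ≤ μ ω) ∧ (∑ ω, μ ω) = 1 ∧
      (∀ (x : Fin 4) (y : Bool), 0 < prob μ (fun ω => X ω = x) →
        condProb μ (fun ω => Yhat ω = y) (fun ω => X ω = x)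
          = condProb μ (fun ω => Y ω = y) (fun ω => X ω = x)) ∧
      (∃ (y i₁ i₂ : Bool),
        condProb μ (fun ω => Yhat ω = y) (fun ω => I ω = i₁)
          ≠ condProb μ (fun ω => Yhat ω = y) (fun ω => I ω = i₂)) := by
  let μ : Fin 2 → ℝ := fun _ => 1 / 2
  let I : Fin 2 → Bool := fun ω => decide (ω = 1)
  have hμ : ∀ ω, 0 ≤ μ ω := fun _ => by norm_num
  have hgroup : prob μ (fun ω => I ω = true) ≠ 0 :=
    (prob_pos_of_mem (p := fun ω => I ω = true) hμ (ω₀ := 1) rfl (by norm_num)).ne'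
  refine ⟨2, μ, Fin.castLE (by norm_num), I, I, I, hμ, by simp [μ], fun _ _ _ => rfl,
    true, true, false, ?_⟩
  rw [condProb_self hgroup, condProb_eq_zero_of_disjoint (by simp)]
  exact one_ne_zero
end

section
/- Let (Ω, μ) be a finite probability space, X : Ω → α a random variable with finite codomain, f : α → Bool, and set Y := f ∘ X and Ŷ := f ∘ X. Then Ŷ is a perfect classifier for Y (indeed P(Ŷ = y | X = x) = P(Y = y | X = x) for all y and all x with μ(X = x) > 0), and for an attribute I : Ω → β with finite codomain, demographic parity of Ŷ with respect to I — i.e., P(Ŷ = y | I = i₁) = P(Ŷ = y | I = i₂) for all y and all i₁, i₂ with μ(I = i₁) > 0 and μ(I = i₂) > 0 — holds if and only if Y is independent of I, i.e., μ(Y = y ∧ I = i) = μ(Y = y) · μ(I = i) for all y and i. Consequently, whenever the label Y is determined by the entangled input X and Y is not independent of the attribute I, the perfect classifier Ŷ violates demographic parity. -/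
/-!
Since `Ŷ` and `Y` are the same random variable, perfection is trivial, and the content is a
fact about a single event `A = {Y = y}`: `P(A | I = i)` is the same number `c` for all `i` of
positive probability iff `P(A ∧ I = i) = c · P(I = i)` for every `i` (null fibres contribute `0`
to both sides), and summing over `i` identifies `c` with `P(A)`.
-/

section Prob

variable {Ω β : Type*} [Fintype Ω] [Fintype β] (μ : Ω → ℝ)

theorem prob_nonneg (hμ0 : ∀ ω, 0 ≤ μ ω) (p : Ω → Prop) : 0 ≤ prob μ p := by
  classical
  exact Finset.sum_nonneg fun ω _ => by split_ifs <;> simp [hμ0 ω]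

theorem prob_and_le_right (hμ0 : ∀ ω, 0 ≤ μ ω) (p q : Ω → Prop) :
    prob μ (fun ω => p ω ∧ q ω) ≤ prob μ q := by
  classical
  refine Finset.sum_le_sum fun ω _ => ?_
  by_cases hp : p ω <;> by_cases hq : q ω <;> simp [hp, hq, hμ0 ω]

theorem prob_true : prob μ (fun _ => True) = ∑ ω, μ ω := by
  simp [prob]

theorem sum_prob_and_fiber (p : Ω → Prop) (I : Ω → β) :
    ∑ i, prob μ (fun ω => p ω ∧ I ω = i) = prob μ p := by
  classical
  unfold prob
  rw [Finset.sum_comm]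
  refine Finset.sum_congr rfl fun ω _ => ?_
  by_cases hp : p ω <;> simp [hp]

theorem sum_prob_fiber (hμ1 : ∑ ω, μ ω = 1) (I : Ω → β) :
    ∑ i, prob μ (fun ω => I ω = i) = 1 := by
  simpa [prob_true, hμ1] using sum_prob_and_fiber μ (fun _ => True) I

theorem exists_prob_fiber_pos (hμ0 : ∀ ω, 0 ≤ μ ω) (hμ1 : ∑ ω, μ ω = 1) (I : Ω → β) :
    ∃ i, 0 < prob μ (fun ω => I ω = i) := by
  by_contra! h
  have hzero : ∑ i, prob μ (fun ω => I ω = i) = 0 :=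
    Finset.sum_eq_zero fun i _ => le_antisymm (h i) (prob_nonneg μ hμ0 _)
  rw [sum_prob_fiber μ hμ1] at hzero
  exact one_ne_zero hzero

/-- Holds also when `P(q) = 0`, where `condProb` takes the junk value `x / 0 = 0`. -/
theorem prob_and_eq_condProb_mul (hμ0 : ∀ ω, 0 ≤ μ ω) (p q : Ω → Prop) :
    prob μ (fun ω => p ω ∧ q ω) = condProb μ p q * prob μ q := by
  rcases (prob_nonneg μ hμ0 q).eq_or_lt with hq | hq
  · rw [← hq, mul_zero]
    exact le_antisymm (hq ▸ prob_and_le_right μ hμ0 p q) (prob_nonneg μ hμ0 _)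
  · exact (div_mul_cancel₀ _ hq.ne').symm

theorem condProb_eq_prob_of_indep {p q : Ω → Prop}
    (hind : prob μ (fun ω => p ω ∧ q ω) = prob μ p * prob μ q) (hq : prob μ q ≠ 0) :
    condProb μ p q = prob μ p := by
  rw [condProb, hind, mul_div_cancel_right₀ _ hq]

theorem prob_eq_of_prob_and_fiber_eq_mul (hμ1 : ∑ ω, μ ω = 1) {p : Ω → Prop} {I : Ω → β}
    {c : ℝ} (h : ∀ i, prob μ (fun ω => p ω ∧ I ω = i) = c * prob μ (fun ω => I ω = i)) :
    prob μ p = c := by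
  rw [← sum_prob_and_fiber μ p I, Finset.sum_congr rfl fun i _ => h i, ← Finset.mul_sum,
    sum_prob_fiber μ hμ1, mul_one]

theorem indep_fiber_of_condProb_fiber_eq (hμ0 : ∀ ω, 0 ≤ μ ω) (hμ1 : ∑ ω, μ ω = 1)
    (p : Ω → Prop) (I : Ω → β)
    (hconst : ∀ i₁ i₂, 0 < prob μ (fun ω => I ω = i₁) → 0 < prob μ (fun ω => I ω = i₂) →
      condProb μ p (fun ω => I ω = i₁) = condProb μ p (fun ω => I ω = i₂)) (i : β) :
    prob μ (fun ω => p ω ∧ I ω = i) = prob μ p * prob μ (fun ω => I ω = i) := by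
  obtain ⟨i₀, hi₀⟩ := exists_prob_fiber_pos μ hμ0 hμ1 I
  have hfiber : ∀ j, prob μ (fun ω => p ω ∧ I ω = j)
      = condProb μ p (fun ω => I ω = i₀) * prob μ (fun ω => I ω = j) := by
    intro j
    rw [prob_and_eq_condProb_mul μ hμ0]
    rcases (prob_nonneg μ hμ0 (fun ω => I ω = j)).eq_or_lt with hj | hj
    · rw [← hj, mul_zero, mul_zero]
    · rw [hconst j i₀ hj hi₀]
  rw [prob_eq_of_prob_and_fiber_eq_mul μ hμ1 hfiber, hfiber i]

theorem condProb_fiber_eq_iff_indep (hμ0 : ∀ ω, 0 ≤ μ ω) (hμ1 : ∑ ω, μ ω = 1)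
    (p : Ω → Prop) (I : Ω → β) :
    (∀ i₁ i₂, 0 < prob μ (fun ω => I ω = i₁) → 0 < prob μ (fun ω => I ω = i₂) →
      condProb μ p (fun ω => I ω = i₁) = condProb μ p (fun ω => I ω = i₂)) ↔
    ∀ i, prob μ (fun ω => p ω ∧ I ω = i) = prob μ p * prob μ (fun ω => I ω = i) :=
  ⟨indep_fiber_of_condProb_fiber_eq μ hμ0 hμ1 p I, fun hind i₁ i₂ h₁ h₂ => by
    rw [condProb_eq_prob_of_indep μ (hind i₁) h₁.ne', condProb_eq_prob_of_indep μ (hind i₂) h₂.ne']⟩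

end Prob

/-- If `Y = f ∘ X` and `Ŷ = f ∘ X`, then `Ŷ` is a perfect classifier for `Y`,
and demographic parity of `Ŷ` with respect to an attribute `I` holds iff `Y`
is independent of `I`.  Consequently, whenever `Y` is determined by the
entangled input `X` and `Y` is not independent of `I`, the perfect classifier
`Ŷ` violates demographic parity. -/
theorem perfect_classifier_parity_iff_indep
    {Ω α β : Type*} [Fintype Ω] [Fintype α] [Fintype β]
    (μ : Ω → ℝ) (hμ0 : ∀ ω, 0 ≤ μ ω) (hμ1 : (∑ ω, μ ω) = 1)
    (X : Ω → α) (f : α → Bool) (I : Ω → β)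
    (Y : Ω → Bool) (Yhat : Ω → Bool)
    (hY : Y = f ∘ X) (hYhat : Yhat = f ∘ X) :
    (∀ (y : Bool) (x : α), 0 < prob μ (fun ω => X ω = x) →
      condProb μ (fun ω => Yhat ω = y) (fun ω => X ω = x)
        = condProb μ (fun ω => Y ω = y) (fun ω => X ω = x)) ∧
    ((∀ (y : Bool) (i₁ i₂ : β),
        0 < prob μ (fun ω => I ω = i₁) → 0 < prob μ (fun ω => I ω = i₂) →
        condProb μ (fun ω => Yhat ω = y) (fun ω => I ω = i₁)
          = condProb μ (fun ω => Yhat ω = y) (fun ω => I ω = i₂))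
      ↔ (∀ (y : Bool) (i : β),
          prob μ (fun ω => Y ω = y ∧ I ω = i)
            = prob μ (fun ω => Y ω = y) * prob μ (fun ω => I ω = i))) ∧
    ((¬ (∀ (y : Bool) (i : β),
          prob μ (fun ω => Y ω = y ∧ I ω = i)
            = prob μ (fun ω => Y ω = y) * prob μ (fun ω => I ω = i))) →
      ∃ (y : Bool) (i₁ i₂ : β),
        0 < prob μ (fun ω => I ω = i₁) ∧ 0 < prob μ (fun ω => I ω = i₂) ∧
        condProb μ (fun ω => Yhat ω = y) (fun ω => I ω = i₁)
          ≠ condProb μ (fun ω => Yhat ω = y) (fun ω => I ω = i₂)) := by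
  obtain rfl : Yhat = Y := hYhat.trans hY.symm
  have parity_iff_indep := forall_congr' fun y : Bool =>
    condProb_fiber_eq_iff_indep μ hμ0 hμ1 (fun ω => Yhat ω = y) I
  refine ⟨fun _ _ _ => rfl, parity_iff_indep, fun hdep => ?_⟩
  by_contra! hparity
  exact hdep (parity_iff_indep.mp hparity)
end
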